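/- If f(x) ~ N(μ, σ²) with σ > 0 and f⁺ is a constant, then the expected improvement E[max(0, f(x) − f⁺)] equals σ[z Φ(z) + φ(z)] where z = (μ − f⁺)/σ, Φ is the standard normal CDF, and φ is the standard normal PDF. -/

import Mathlib

/-!
Write `f(x) = m + σ T` with `T` standard normal. Then `(f(x) - f⁺)⁺ = σ (T + z)⁺`, so it
suffices to compute `E (T + z)⁺ = ∫_{-z}^∞ (t + z) φ(t) dt`. The `z`-part is `z Φ(z)` by the
symmetry of `φ`, and the `t`-part is `φ(-z) = φ(z)` because `-φ` is an antiderivative of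
`t φ(t)`.
-/

open MeasureTheory ProbabilityTheory Real Filter Set Topology
open scoped NNReal

namespace ProbabilityTheory

lemma gaussianPDFReal_zero_neg (v : ℝ≥0) (x : ℝ) :
    gaussianPDFReal 0 v (-x) = gaussianPDFReal 0 v x := by
  simp [gaussianPDFReal]

lemma hasDerivAt_gaussianPDFReal (μ : ℝ) (v : ℝ≥0) (x : ℝ) :
    HasDerivAt (gaussianPDFReal μ v) (-((x - μ) / v) * gaussianPDFReal μ v x) x := by
  have hexponent : HasDerivAt (fun y => -(y - μ) ^ 2 / (2 * v)) (-((x - μ) / v)) x := by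
    refine ((((hasDerivAt_id x).sub_const μ).pow 2).neg.div_const (2 * v)).congr_deriv ?_
    simp only [id]
    push_cast
    ring
  rw [gaussianPDFReal_def]
  exact (hexponent.exp.const_mul _).congr_deriv (by ring)

lemma tendsto_gaussianPDFReal_atTop (μ : ℝ) {v : ℝ≥0} (hv : v ≠ 0) :
    Tendsto (gaussianPDFReal μ v) atTop (𝓝 0) := by
  have hexponent : Tendsto (fun x => -(x - μ) ^ 2 / (2 * v)) atTop atBot := by
    refine Tendsto.atBot_div_const (by positivity) (tendsto_neg_atTop_atBot.comp ?_)
    exact (tendsto_pow_atTop two_ne_zero).comp (tendsto_atTop_add_const_right _ _ tendsto_id)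
  simpa only [gaussianPDFReal_def, Function.comp_def, mul_zero] using
    (tendsto_exp_atBot.comp hexponent).const_mul (√(2 * π * v))⁻¹

lemma integrable_mul_gaussianPDFReal {v : ℝ≥0} (hv : v ≠ 0) :
    Integrable fun x => x * gaussianPDFReal 0 v x := by
  have h := (integrable_mul_exp_neg_mul_sq (b := (2 * v : ℝ)⁻¹) (by positivity)).const_mul
    (√(2 * π * v))⁻¹
  refine h.congr (Eventually.of_forall fun x => ?_)
  simp only [gaussianPDFReal, sub_zero]
  ring_nf

lemma integral_Ioi_mul_gaussianPDFReal {v : ℝ≥0} (hv : v ≠ 0) (a : ℝ) :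
    ∫ x in Ioi a, x * gaussianPDFReal 0 v x = v * gaussianPDFReal 0 v a := by
  have hderiv (x : ℝ) : HasDerivAt (fun y => -(v * gaussianPDFReal 0 v y))
      (x * gaussianPDFReal 0 v x) x :=
    ((hasDerivAt_gaussianPDFReal 0 v x).const_mul (v : ℝ)).neg.congr_deriv <| by
      rw [sub_zero]
      field_simp
  have hlim : Tendsto (fun y => -(v * gaussianPDFReal 0 v y)) atTop (𝓝 0) := by
    simpa using ((tendsto_gaussianPDFReal_atTop 0 hv).const_mul (v : ℝ)).neg
  simpa using integral_Ioi_of_hasDerivAt_of_tendsto' (fun x _ => hderiv x)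
    (integrable_mul_gaussianPDFReal hv).integrableOn hlim

lemma integral_Ioi_neg_gaussianPDFReal {v : ℝ≥0} (hv : v ≠ 0) (a : ℝ) :
    ∫ x in Ioi (-a), gaussianPDFReal 0 v x = (gaussianReal 0 v (Iic a)).toReal := by
  rw [gaussianReal_apply_eq_integral 0 hv, ENNReal.toReal_ofReal
    (setIntegral_nonneg measurableSet_Iic fun x _ => gaussianPDFReal_nonneg 0 v x)]
  simpa only [neg_neg, gaussianPDFReal_zero_neg] using
    integral_comp_neg_Ioi (-a) (gaussianPDFReal 0 v)

lemma integral_max_zero_add_gaussianReal {v : ℝ≥0} (hv : v ≠ 0) (z : ℝ) :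
    ∫ x, max 0 (x + z) ∂gaussianReal 0 v =
      z * (gaussianReal 0 v (Iic z)).toReal + v * gaussianPDFReal 0 v z := by
  have hsplit : (fun x => gaussianPDFReal 0 v x • max 0 (x + z)) =
      (Ioi (-z)).indicator fun x => x * gaussianPDFReal 0 v x + z * gaussianPDFReal 0 v x := by
    ext x
    rcases lt_or_ge (-z) x with hx | hx
    · rw [indicator_of_mem (mem_Ioi.mpr hx), smul_eq_mul, max_eq_right (by linarith)]
      ring
    · rw [indicator_of_notMem (notMem_Ioi.mpr hx), smul_eq_mul, max_eq_left (by linarith),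
        mul_zero]
  rw [integral_gaussianReal_eq_integral_smul hv, hsplit, integral_indicator measurableSet_Ioi,
    integral_add (integrable_mul_gaussianPDFReal hv).integrableOn
      ((integrable_gaussianPDFReal 0 v).const_mul z).integrableOn,
    integral_const_mul, integral_Ioi_mul_gaussianPDFReal hv, integral_Ioi_neg_gaussianPDFReal hv,
    gaussianPDFReal_zero_neg]
  ring

lemma gaussianReal_map_const_mul_add (c μ : ℝ) :
    (gaussianReal 0 1).map (fun x => c * x + μ) = gaussianReal μ ⟨c ^ 2, sq_nonneg c⟩ := by
  rw [← Function.comp_def (· + μ) (c * ·), ← Measure.map_map (measurable_add_const μ)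
    (measurable_const_mul c), gaussianReal_map_const_mul, gaussianReal_map_add_const]
  congr 1
  · ring
  · exact mul_one _

end ProbabilityTheory

/-- **Expected improvement for a Gaussian.** If `f(x) ~ N(μ, σ²)` with `σ > 0` and
`f⁺` is the current best value, then
`E[max (0, f(x) − f⁺)] = σ (z Φ(z) + φ(z))` with `z = (μ − f⁺)/σ`, where `Φ` is the
standard normal CDF and `φ` the standard normal PDF. -/
theorem expected_improvement_gaussian (m σ fplus : ℝ) (hσ : 0 < σ)
    (z : ℝ) (hz : z = (m - fplus) / σ) :
    ∫ y, max 0 (y - fplus) ∂(gaussianReal m ⟨σ ^ 2, sq_nonneg σ⟩) =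
      σ * (z * ((gaussianReal 0 1) (Set.Iic z)).toReal + gaussianPDFReal 0 1 z) := by
  have hscale (x : ℝ) : max 0 (σ * x + m - fplus) = σ * max 0 (x + z) := by
    rw [mul_max_of_nonneg _ _ hσ.le, mul_zero, hz, mul_add, mul_div_cancel₀ _ hσ.ne']
    ring_nf
  rw [← gaussianReal_map_const_mul_add, integral_map (by fun_prop) (by fun_prop)]
  simp only [hscale, integral_const_mul, integral_max_zero_add_gaussianReal one_ne_zero,
    NNReal.coe_one, one_mul]
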